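/- arXiv:1912.06664 — 3 statements merged into one kernel-verified Lean document; each statement's English description precedes it below -/
import Mathlib

section
/- Discrete Loomis–Whitney inequality: let n ≥ 2 and for i = 1,…,n let π_i : ℤⁿ → ℤ^{n-1} be the projection forgetting the i-th coordinate. Then for nonnegative functions g_i : ℤ^{n-1} → ℝ≥0, ‖∏_{i=1}^{n} g_i ∘ π_i‖_{ℓ^{1/(n-1)}(ℤⁿ)} ≤ ∏_{i=1}^{n} ‖g_i‖_{ℓ^1(ℤ^{n-1})}. -/
/-!
After distributing the `m`-th root, the claim reads `∑_z ∏ᵢ Fᵢ(πᵢ z)^{1/m} ≤ ∏ᵢ ‖Fᵢ‖₁^{1/m}`,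
which is proved by induction on `m` over an arbitrary coordinate type. Writing `z = (t, y)`, the
factor `F₀(π₀ z) = F₀(y)` does not depend on `t`; Hölder's inequality with exponents
`1 / (m + 1)` and `m / (m + 1)` in `y`, followed by the induction hypothesis for the slices
`F_{j+1}(t, ·)`, bounds the sum over `y` by `‖F₀‖₁^{1/(m+1)} ∏ⱼ ‖F_{j+1}(t, ·)‖₁^{1/(m+1)}`.
Summing over `t` with the `(m + 1)`-fold Hölder inequality closes the induction.
-/

open scoped NNReal ENNReal

open MeasureTheory

theorem Fin.removeNth_succ_cons {α : Type*} {n : ℕ} (i : Fin (n + 1)) (t : α)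
    (y : Fin (n + 1) → α) :
    i.succ.removeNth (Fin.cons t y : Fin (n + 2) → α) = Fin.cons t (i.removeNth y) :=
  Fin.cons_comp_succ_succAbove t y i

namespace ENNReal

variable {α : Type*}

theorem tsum_mul_rpow_le (f g : α → ℝ≥0∞) {p q : ℝ} (hp : 0 ≤ p) (hq : 0 ≤ q) (hpq : p + q = 1) :
    ∑' a, f a ^ p * g a ^ q ≤ (∑' a, f a) ^ p * (∑' a, g a) ^ q := by
  let _ : MeasurableSpace α := ⊤
  simpa only [lintegral_count' (Measurable.of_discrete)] using
    lintegral_mul_norm_pow_le (μ := Measure.count) (Measurable.of_discrete (f := f)).aemeasurable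
      (Measurable.of_discrete (f := g)).aemeasurable hp hq hpq

theorem tsum_prod_rpow_le {ι : Type*} (s : Finset ι) (f : ι → α → ℝ≥0∞) {p : ι → ℝ}
    (hp : ∑ i ∈ s, p i = 1) (h2p : ∀ i ∈ s, 0 ≤ p i) :
    ∑' a, ∏ i ∈ s, f i a ^ p i ≤ ∏ i ∈ s, (∑' a, f i a) ^ p i := by
  let _ : MeasurableSpace α := ⊤
  simpa only [lintegral_count' (Measurable.of_discrete)] using
    lintegral_prod_norm_pow_le (μ := Measure.count) s
      (fun i _ => (Measurable.of_discrete (f := f i)).aemeasurable) hp h2p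

theorem tsum_fin_cons {n : ℕ} (F : (Fin (n + 1) → α) → ℝ≥0∞) :
    ∑' z, F z = ∑' (t : α) (y : Fin n → α), F (Fin.cons t y) := by
  rw [← (Fin.consEquiv fun _ => α).tsum_eq]
  exact ENNReal.tsum_prod'

theorem tsum_prod_removeNth_two (F : Fin 2 → (Fin 1 → α) → ℝ≥0∞) :
    ∑' z : Fin 2 → α, ∏ i, F i (i.removeNth z) = ∏ i, ∑' w, F i w := by
  have h_const (t : α) (y : Fin 1 → α) :
      (1 : Fin 2).removeNth (Fin.cons t y : Fin 2 → α) = fun _ => t := by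
    funext j; fin_cases j; rfl
  calc ∑' z : Fin 2 → α, ∏ i, F i (i.removeNth z)
      = ∑' (t : α) (y : Fin 1 → α), F 0 y * F 1 fun _ => t := by
        simp only [tsum_fin_cons (n := 1), Fin.prod_univ_two, Fin.removeNth_zero,
          Fin.tail_cons, h_const]
    _ = (∑' w, F 0 w) * ∑' t : α, F 1 fun _ => t := by
        simp only [ENNReal.tsum_mul_right, ENNReal.tsum_mul_left]
    _ = ∏ i, ∑' w, F i w := by
        rw [Fin.prod_univ_two, ← (Equiv.funUnique (Fin 1) α).symm.tsum_eq (F 1)]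
        rfl

theorem tsum_mul_prod_removeNth_rpow_le {m : ℕ} (hm : 1 ≤ m)
    (ih : ∀ G : Fin (m + 1) → (Fin m → α) → ℝ≥0∞,
      ∑' y : Fin (m + 1) → α, ∏ j, G j (j.removeNth y) ^ (1 / m : ℝ) ≤
        ∏ j, (∑' w, G j w) ^ (1 / m : ℝ))
    (f : (Fin (m + 1) → α) → ℝ≥0∞) (G : Fin (m + 1) → (Fin m → α) → ℝ≥0∞) :
    ∑' y, f y ^ (1 / (m + 1) : ℝ) * ∏ j, G j (j.removeNth y) ^ (1 / (m + 1) : ℝ) ≤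
      (∑' y, f y) ^ (1 / (m + 1) : ℝ) * ∏ j, (∑' w, G j w) ^ (1 / (m + 1) : ℝ) := by
  have hm0 : (m : ℝ) ≠ 0 := Nat.cast_ne_zero.mpr (by omega)
  have hq : (0 : ℝ) ≤ m / (m + 1) := by positivity
  have h_regroup (x : Fin (m + 1) → ℝ≥0∞) :
      ∏ j, x j ^ (1 / (m + 1) : ℝ) = (∏ j, x j ^ (1 / m : ℝ)) ^ (m / (m + 1) : ℝ) := by
    have h_exp : (1 / m : ℝ) * (m / (m + 1)) = 1 / (m + 1) := by field_simp
    rw [← prod_rpow_of_nonneg hq]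
    simp only [← rpow_mul, h_exp]
  calc ∑' y, f y ^ (1 / (m + 1) : ℝ) * ∏ j, G j (j.removeNth y) ^ (1 / (m + 1) : ℝ)
      = ∑' y, f y ^ (1 / (m + 1) : ℝ) *
          (∏ j, G j (j.removeNth y) ^ (1 / m : ℝ)) ^ (m / (m + 1) : ℝ) := by
        simp only [h_regroup]
    _ ≤ (∑' y, f y) ^ (1 / (m + 1) : ℝ) *
          (∑' y : Fin (m + 1) → α, ∏ j, G j (j.removeNth y) ^ (1 / m : ℝ)) ^ (m / (m + 1) : ℝ) :=
        tsum_mul_rpow_le _ _ (by positivity) hq (by field_simp; ring)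
    _ ≤ (∑' y, f y) ^ (1 / (m + 1) : ℝ) *
          (∏ j, (∑' w, G j w) ^ (1 / m : ℝ)) ^ (m / (m + 1) : ℝ) := by
        gcongr
        exact ih G
    _ = (∑' y, f y) ^ (1 / (m + 1) : ℝ) * ∏ j, (∑' w, G j w) ^ (1 / (m + 1) : ℝ) := by
        rw [h_regroup]

theorem tsum_prod_removeNth_rpow_le {m : ℕ} (hm : 1 ≤ m) (F : Fin (m + 1) → (Fin m → α) → ℝ≥0∞) :
    ∑' z : Fin (m + 1) → α, ∏ i, F i (i.removeNth z) ^ (1 / m : ℝ) ≤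
      ∏ i, (∑' w, F i w) ^ (1 / m : ℝ) := by
  induction m, hm using Nat.le_induction with
  | base => simpa using (tsum_prod_removeNth_two F).le
  | succ m hm ih =>
    have hp : ∑ _j : Fin (m + 1), (1 / (m + 1) : ℝ) = 1 := by
      simp only [Finset.sum_const, Finset.card_univ, Fintype.card_fin, nsmul_eq_mul]
      push_cast
      field_simp
    push_cast
    calc ∑' z : Fin (m + 2) → α, ∏ i, F i (i.removeNth z) ^ (1 / (m + 1) : ℝ)
        = ∑' (t : α) (y : Fin (m + 1) → α), F 0 y ^ (1 / (m + 1) : ℝ) *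
            ∏ j : Fin (m + 1), F j.succ (Fin.cons t (j.removeNth y)) ^ (1 / (m + 1) : ℝ) := by
          simp only [tsum_fin_cons (n := m + 1), Fin.prod_univ_succ (n := m + 1),
            Fin.removeNth_zero, Fin.tail_cons, Fin.removeNth_succ_cons]
      _ ≤ ∑' t : α, (∑' w, F 0 w) ^ (1 / (m + 1) : ℝ) *
            ∏ j : Fin (m + 1), (∑' w, F j.succ (Fin.cons t w)) ^ (1 / (m + 1) : ℝ) :=
          ENNReal.tsum_le_tsum fun t =>
            tsum_mul_prod_removeNth_rpow_le hm ih _ fun j w => F j.succ (Fin.cons t w)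
      _ = (∑' w, F 0 w) ^ (1 / (m + 1) : ℝ) *
            ∑' t : α, ∏ j : Fin (m + 1), (∑' w, F j.succ (Fin.cons t w)) ^ (1 / (m + 1) : ℝ) :=
          ENNReal.tsum_mul_left
      _ ≤ (∑' w, F 0 w) ^ (1 / (m + 1) : ℝ) * ∏ j : Fin (m + 1),
            (∑' (t : α) (w : Fin m → α), F j.succ (Fin.cons t w)) ^ (1 / (m + 1) : ℝ) := by
          gcongr
          exact tsum_prod_rpow_le _ _ hp fun _ _ => by positivity
      _ = ∏ i, (∑' w, F i w) ^ (1 / (m + 1) : ℝ) := by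
          simp only [Fin.prod_univ_succ (n := m + 1), ← tsum_fin_cons]

end ENNReal

/-- Discrete Loomis–Whitney inequality: with `n = m + 1 ≥ 2` and `π_i : ℤⁿ → ℤ^{n-1}`
forgetting the `i`-th coordinate,
`‖∏ g_i ∘ π_i‖_{ℓ^{1/(n-1)}(ℤⁿ)} ≤ ∏ ‖g_i‖_{ℓ^1(ℤ^{n-1})}`. -/
theorem stmt3 (m : ℕ) (hm : 1 ≤ m) (g : Fin (m + 1) → (Fin m → ℤ) → ℝ≥0) :
    (∑' z : Fin (m + 1) → ℤ,
        (∏ i, ((g i fun j => z (Fin.succAbove i j) : ℝ≥0) : ℝ≥0∞)) ^ ((1 : ℝ) / m)) ^ (m : ℝ) ≤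
      ∏ i, ∑' w : Fin m → ℤ, ((g i w : ℝ≥0) : ℝ≥0∞) := by
  have hm0 : (m : ℝ) ≠ 0 := Nat.cast_ne_zero.mpr (by omega)
  have hp : (0 : ℝ) ≤ 1 / m := by positivity
  calc (∑' z : Fin (m + 1) → ℤ,
          (∏ i, ((g i fun j => z (Fin.succAbove i j) : ℝ≥0) : ℝ≥0∞)) ^ ((1 : ℝ) / m)) ^ (m : ℝ)
      = (∑' z : Fin (m + 1) → ℤ, ∏ i, (g i (i.removeNth z) : ℝ≥0∞) ^ ((1 : ℝ) / m)) ^ (m : ℝ) := by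
        simp only [ENNReal.prod_rpow_of_nonneg hp]
        rfl
    _ ≤ (∏ i, (∑' w : Fin m → ℤ, (g i w : ℝ≥0∞)) ^ ((1 : ℝ) / m)) ^ (m : ℝ) := by
        gcongr
        exact ENNReal.tsum_prod_removeNth_rpow_le hm _
    _ = ∏ i, ∑' w : Fin m → ℤ, ((g i w : ℝ≥0) : ℝ≥0∞) := by
        rw [ENNReal.prod_rpow_of_nonneg hp, one_div, ENNReal.rpow_inv_rpow hm0]
end

section
/- Mixed-norm refinement of the discrete Loomis–Whitney inequality: let k ≤ n, decompose ℤⁿ = ℤ^k × ℤ^{n-k}, and for i = 1,…,k write the projection π_i : ℤⁿ → ℤ^{n-1} forgetting the i-th coordinate of the ℤ^k factor. Suppose for each i the target lattice splits as ℤ^{n-1} = L_i' × L_i'' with each coordinate of L_i'' among the ℤ^{n-k} coordinates, and the L_i'' factors are pairwise disjoint sets of coordinates. Then for g_i : L_i' × L_i'' → ℝ≥0, ‖∏_{i=1}^{k} g_i ∘ π_i‖_{ℓ^{2/(k-1)}(ℤⁿ)} ≲ ∏_{i=1}^{k} ‖g_i‖_{ℓ^2 ℓ^∞(L_i' × L_i'')},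 where ‖g‖_{ℓ^2ℓ^∞} = (∑_{z' ∈ L_i'} sup_{z'' ∈ L_i''} g(z',z'')²)^{1/2}. -/
open scoped NNReal ENNReal
open MeasureTheory Function Finset

open scoped ENNReal

noncomputable section

instance : SigmaFinite (Measure.count : Measure ℤ) :=
  Measure.sigmaFinite_of_countable (Set.countable_range (fun x : ℤ => ({x} : Set ℤ)))
    (by rintro s ⟨x, rfl⟩; simp [Measure.count_singleton])
    (by rw [Set.sUnion_range]; exact Set.iUnion_of_singleton ℤ)

variable {δ : Type*} [Fintype δ] [DecidableEq δ]

local notation "μz" => (fun _ : δ => (Measure.count : Measure ℤ))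

theorem finner_discrete {ι : Type*} [Fintype ι] (s : Finset δ) :
    ∀ (θ : ι → ℝ), (∀ i, 0 ≤ θ i) → ∀ (D : ι → Finset δ) (f : ι → (δ → ℤ) → ℝ≥0∞),
    (∀ i (x y : δ → ℤ), (∀ j ∈ D i, x j = y j) → f i x = f i y) →
    (∀ i, D i ⊆ s) →
    (∀ j ∈ s, 1 ≤ ∑ i ∈ Finset.univ.filter (fun i => j ∈ D i), θ i) →
    ∀ (x : δ → ℤ),
    (∫⋯∫⁻_s, (fun y => ∏ i, f i y ^ θ i) ∂μz) x ≤
      ∏ i, ((∫⋯∫⁻_(D i), f i ∂μz) x) ^ θ i := by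
  classical
  induction s using Finset.induction with
  | empty =>
    intro θ hθ D f hdep hDs hw x
    have hD : ∀ i, D i = ∅ := fun i => Finset.subset_empty.mp (hDs i)
    simp only [lmarginal_empty]
    refine le_of_eq (Finset.prod_congr rfl fun i _ => ?_)
    rw [hD i, lmarginal_empty]
  | @insert a s ha ih =>
    intro θ hθ D f hdep hDs hw x
    have hmeas : ∀ (h : (δ → ℤ) → ℝ≥0∞), Measurable h := fun h => measurable_of_countable h
    have hmeasZ : ∀ (h : ℤ → ℝ≥0∞), Measurable h := fun h => measurable_of_countable h
    set I : Finset ι := Finset.univ.filter (fun i => a ∈ D i) with hI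
    set W : ℝ := ∑ i ∈ I, θ i with hWdef
    have hW1 : 1 ≤ W := hw a (Finset.mem_insert_self a s)
    have hW0 : (0:ℝ) < W := lt_of_lt_of_le one_pos hW1
    set g : ι → (δ → ℤ) → ℝ≥0∞ :=
      fun i => if a ∈ D i then (∫⋯∫⁻_{a}, f i ∂μz) else f i with hg
    -- value ≤ marginal
    have hle : ∀ i, a ∈ D i → ∀ (y : δ → ℤ) (t : ℤ),
        f i (update y a t) ≤ g i y := by
      intro i hi y t
      rw [hg]
      simp only [if_pos hi, lmarginal_singleton]
      rw [lintegral_count]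
      exact ENNReal.le_tsum t
    -- the key pointwise (in y) estimate for the innermost integral
    have hA : ∀ y : δ → ℤ,
        (∫⁻ t, (fun z => ∏ i, f i z ^ θ i) (update y a t) ∂Measure.count) ≤
          ∏ i, g i y ^ θ i := by
      intro y
      have h1 : ∀ t : ℤ, ∏ i, f i (update y a t) ^ θ i =
          (∏ i ∈ I, f i (update y a t) ^ θ i) * ∏ i ∈ Iᶜ, f i y ^ θ i := by
        intro t
        rw [← Finset.prod_mul_prod_compl I]
        congr 1
        refine Finset.prod_congr rfl fun i hi => ?_
        have hai : a ∉ D i := by simpa [hI] using hi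
        congr 1
        refine hdep i _ _ fun j hj => ?_
        exact Function.update_of_ne (by rintro rfl; exact hai hj) _ _
      have h2 : ∀ t : ℤ, ∏ i ∈ I, f i (update y a t) ^ θ i ≤
          (∏ i ∈ I, f i (update y a t) ^ (θ i / W)) *
            ∏ i ∈ I, (g i y) ^ (θ i * (1 - 1/W)) := by
        intro t
        rw [← Finset.prod_mul_distrib]
        refine Finset.prod_le_prod' fun i hi => ?_
        have hiD : a ∈ D i := by simpa [hI] using hi
        have e1 : θ i = θ i / W + θ i * (1 - 1/W) := by field_simp; ring
        have h3 : (0:ℝ) ≤ θ i * (1 - 1/W) := by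
          apply mul_nonneg (hθ i)
          have : 1/W ≤ 1 := by rw [div_le_one hW0]; exact hW1
          linarith
        calc f i (update y a t) ^ θ i
            = f i (update y a t) ^ (θ i / W) * f i (update y a t) ^ (θ i * (1 - 1/W)) := by
              rw [← ENNReal.rpow_add_of_nonneg _ _ (div_nonneg (hθ i) hW0.le) h3, ← e1]
          _ ≤ f i (update y a t) ^ (θ i / W) * (g i y) ^ (θ i * (1 - 1/W)) := by
              gcongr
              exact hle i hiD y t
      calc ∫⁻ t, (fun z => ∏ i, f i z ^ θ i) (update y a t) ∂Measure.count
          = (∫⁻ t, ∏ i ∈ I, f i (update y a t) ^ θ i ∂Measure.count) *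
              ∏ i ∈ Iᶜ, f i y ^ θ i := by
            simp_rw [h1]
            rw [lintegral_mul_const _ (hmeasZ _)]
        _ ≤ ((∫⁻ t, ∏ i ∈ I, f i (update y a t) ^ (θ i / W) ∂Measure.count) *
              ∏ i ∈ I, (g i y) ^ (θ i * (1 - 1/W))) * ∏ i ∈ Iᶜ, f i y ^ θ i := by
            gcongr
            calc ∫⁻ t, ∏ i ∈ I, f i (update y a t) ^ θ i ∂Measure.count
                ≤ ∫⁻ t, (∏ i ∈ I, f i (update y a t) ^ (θ i / W)) *
                    ∏ i ∈ I, (g i y) ^ (θ i * (1 - 1/W)) ∂Measure.count :=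
                  lintegral_mono fun t => h2 t
              _ = _ := lintegral_mul_const _ (hmeasZ _)
        _ ≤ ((∏ i ∈ I, (∫⁻ t, f i (update y a t) ∂Measure.count) ^ (θ i / W)) *
              ∏ i ∈ I, (g i y) ^ (θ i * (1 - 1/W))) * ∏ i ∈ Iᶜ, f i y ^ θ i := by
            gcongr
            refine ENNReal.lintegral_prod_norm_pow_le I
              (fun i _ => (hmeasZ _).aemeasurable) ?_ (fun i _ => div_nonneg (hθ i) hW0.le)
            rw [← Finset.sum_div, ← hWdef]
            field_simp
        _ = (∏ i ∈ I, g i y ^ θ i) * ∏ i ∈ Iᶜ, g i y ^ θ i := by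
            congr 1
            · rw [← Finset.prod_mul_distrib]
              refine Finset.prod_congr rfl fun i hi => ?_
              have hiD : a ∈ D i := by simpa [hI] using hi
              have : (∫⁻ t, f i (update y a t) ∂Measure.count) = g i y := by
                rw [hg]; simp only [if_pos hiD, lmarginal_singleton]
              rw [this, ← ENNReal.rpow_add_of_nonneg _ _ (div_nonneg (hθ i) hW0.le)
                (by
                  apply mul_nonneg (hθ i)
                  have : 1/W ≤ 1 := by rw [div_le_one hW0]; exact hW1
                  linarith)]
              congr 1
              field_simp
              ring
            · refine Finset.prod_congr rfl fun i hi => ?_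
              have hai : a ∉ D i := by simpa [hI] using hi
              rw [hg]; simp only [if_neg hai]
        _ = ∏ i, g i y ^ θ i := Finset.prod_mul_prod_compl I _
    -- assemble
    calc (∫⋯∫⁻_insert a s, (fun y => ∏ i, f i y ^ θ i) ∂μz) x
        = (∫⋯∫⁻_s, (fun y =>
            ∫⁻ t, (fun z => ∏ i, f i z ^ θ i) (update y a t) ∂Measure.count) ∂μz) x := by
          rw [lmarginal_insert' _ (hmeas _) ha]
      _ ≤ (∫⋯∫⁻_s, (fun y => ∏ i, g i y ^ θ i) ∂μz) x := lmarginal_mono (fun y => hA y) x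
      _ ≤ ∏ i, ((∫⋯∫⁻_((D i).erase a), g i ∂μz) x) ^ θ i := by
          refine ih θ hθ (fun i => (D i).erase a) g ?_ ?_ ?_ x
          · intro i u v huv
            by_cases hiD : a ∈ D i
            · rw [hg]
              simp only [if_pos hiD, lmarginal_singleton]
              refine lintegral_congr fun t => ?_
              refine hdep i _ _ fun j hj => ?_
              by_cases hja : j = a
              · subst hja; simp
              · rw [Function.update_of_ne hja, Function.update_of_ne hja]
                exact huv j (Finset.mem_erase.mpr ⟨hja, hj⟩)
            · rw [hg]
              simp only [if_neg hiD]
              exact hdep i _ _ fun j hj => huv j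
                (show j ∈ (D i).erase a by rw [Finset.erase_eq_of_notMem hiD]; exact hj)
          · intro i b hb
            rcases Finset.mem_erase.mp hb with ⟨hba, hbD⟩
            rcases Finset.mem_insert.mp (hDs i hbD) with h | h
            · exact absurd h hba
            · exact h
          · intro j hj
            have hja : j ≠ a := fun h => ha (h ▸ hj)
            have : (Finset.univ.filter (fun i => j ∈ (D i).erase a)) =
                (Finset.univ.filter (fun i => j ∈ D i)) := by
              refine Finset.filter_congr fun i _ => ?_
              rw [Finset.mem_erase]
              simp [hja]
            rw [this]
            exact hw j (Finset.mem_insert_of_mem hj)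
      _ = ∏ i, ((∫⋯∫⁻_(D i), f i ∂μz) x) ^ θ i := by
          refine Finset.prod_congr rfl fun i _ => ?_
          congr 1
          by_cases hiD : a ∈ D i
          · rw [lmarginal_erase' (f i) (hmeas _) hiD]
            rw [hg]
            simp only [if_pos hiD, lmarginal_singleton]
          · rw [hg]
            simp only [if_neg hiD, Finset.erase_eq_of_notMem hiD]


theorem pi_count_eq {δ : Type*} [Fintype δ] [DecidableEq δ] :
    (Measure.pi (fun _ : δ => (Measure.count : Measure ℤ))) = Measure.count := by
  ext s hs
  have h1 : s = ⋃ x ∈ s, {x} := by simp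
  rw [h1, measure_biUnion s.to_countable (fun x _ y _ hxy => by simpa using hxy)
    (fun x _ => measurableSet_singleton x),
    measure_biUnion s.to_countable (fun x _ y _ hxy => by simpa using hxy)
    (fun x _ => measurableSet_singleton x)]
  refine tsum_congr fun x => ?_
  rw [Measure.count_singleton]
  have h2 : ({(x : δ → ℤ)} : Set (δ → ℤ)) = Set.pi Set.univ (fun j => {(x : δ → ℤ) j}) := by
    ext y; simp [funext_iff, Set.mem_pi]
  rw [h2, Measure.pi_pi]
  simp [Measure.count_singleton]

theorem lmarginal_count_tsum {δ : Type*} [Fintype δ] [DecidableEq δ] (S : Finset δ)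
    (h : (δ → ℤ) → ℝ≥0∞) (x₀ : δ → ℤ) :
    (∫⋯∫⁻_S, h ∂(fun _ => (Measure.count : Measure ℤ))) x₀ =
      ∑' y : (∀ _ : S, ℤ), h (Function.updateFinset x₀ S y) := by
  unfold lmarginal
  rw [pi_count_eq, lintegral_count]

section auxdefs

variable {k m : ℕ}

def Daux (T : Fin k → Finset (Fin m)) (i : Fin k) : Finset (Fin k ⊕ Fin m) :=
  ((Finset.univ.filter (fun a : Fin k => a ≠ i)).image Sum.inl) ∪
  ((Finset.univ.filter (fun b : Fin m => b ∉ T i)).image Sum.inr)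

lemma mem_Daux_inl {T : Fin k → Finset (Fin m)} {i a : Fin k} :
    Sum.inl a ∈ Daux T i ↔ a ≠ i := by simp [Daux]

lemma mem_Daux_inr {T : Fin k → Finset (Fin m)} {i : Fin k} {b : Fin m} :
    Sum.inr b ∈ Daux T i ↔ b ∉ T i := by simp [Daux]

def Eaux (T : Fin k → Finset (Fin m)) (i : Fin k) :
    (({j : Fin k // j ≠ i} → ℤ) × ({j : Fin m // j ∉ T i} → ℤ)) ≃
      ({x // x ∈ Daux T i} → ℤ) where
  toFun z' j := Sum.elim (fun a => if h : a ≠ i then z'.1 ⟨a, h⟩ else 0)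
      (fun b => if h : b ∉ T i then z'.2 ⟨b, h⟩ else 0) j.1
  invFun y := (fun a => y ⟨Sum.inl a.1, mem_Daux_inl.mpr a.2⟩,
      fun b => y ⟨Sum.inr b.1, mem_Daux_inr.mpr b.2⟩)
  left_inv z' := by
    refine Prod.ext ?_ ?_ <;> funext j
    · simp [j.2]
    · simp [j.2]
  right_inv y := by
    funext j
    obtain ⟨j', hj'⟩ := j
    rcases j' with a | b
    · have ha : a ≠ i := mem_Daux_inl.mp hj'
      simp [ha]
    · have hb : b ∉ T i := mem_Daux_inr.mp hj'
      simp [hb]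

end auxdefs

/-- Mixed-norm refinement of the discrete Loomis–Whitney inequality (Lemma 2.1 of the paper):
`ℤⁿ = ℤ^k × ℤ^m`, `π_i` forgets the `i`-th coordinate of the `ℤ^k` factor, and the target
splits as `L_i' × L_i''` with the `L_i''` blocks pairwise-disjoint subsets of the `ℤ^m`
coordinates. Then `‖∏ g_i ∘ π_i‖_{ℓ^{2/(k-1)}} ≲ ∏ ‖g_i‖_{ℓ²ℓ^∞(L_i' × L_i'')}`. -/
theorem stmt4 (k m : ℕ) (hk : 2 ≤ k) :
    ∃ C : ℝ≥0∞, C ≠ ⊤ ∧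
      ∀ (T : Fin k → Finset (Fin m)),
        (∀ i j, i ≠ j → Disjoint (T i) (T j)) →
        ∀ g : (i : Fin k) →
            (({j : Fin k // j ≠ i} → ℤ) × ({j : Fin m // j ∉ T i} → ℤ)) ×
              ({j : Fin m // j ∈ T i} → ℤ) → ℝ≥0,
          (∑' z : (Fin k → ℤ) × (Fin m → ℤ),
              (∏ i, ((g i ⟨⟨fun j => z.1 j.1, fun j => z.2 j.1⟩, fun j => z.2 j.1⟩ : ℝ≥0) :
                ℝ≥0∞)) ^ (2 / ((k : ℝ) - 1))) ^ (((k : ℝ) - 1) / 2) ≤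
            C * ∏ i,
              (∑' z' : ({j : Fin k // j ≠ i} → ℤ) × ({j : Fin m // j ∉ T i} → ℤ),
                (⨆ z'' : {j : Fin m // j ∈ T i} → ℤ,
                  ((g i (z', z'') : ℝ≥0) : ℝ≥0∞)) ^ (2 : ℝ)) ^ ((1 : ℝ) / 2) := by
  classical
  refine ⟨1, ENNReal.one_ne_top, ?_⟩
  intro T hT g
  rw [one_mul]
  have hk1 : (0:ℝ) < (k:ℝ) - 1 := by
    have h2 : (2:ℝ) ≤ (k:ℝ) := by exact_mod_cast hk
    linarith
  set q : ℝ := 2 / ((k:ℝ) - 1) with hq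
  have hq0 : 0 ≤ q := by positivity
  set θ : ℝ := 1 / ((k:ℝ) - 1) with hθdef
  have hθ0 : 0 ≤ θ := by positivity
  set f : Fin k → ((Fin k ⊕ Fin m) → ℤ) → ℝ≥0∞ := fun i x =>
    (⨆ z'' : {j : Fin m // j ∈ T i} → ℤ,
      ((g i (((fun j : {j : Fin k // j ≠ i} => x (Sum.inl j.1)),
        (fun j : {j : Fin m // j ∉ T i} => x (Sum.inr j.1))), z'') : ℝ≥0) : ℝ≥0∞)) ^ (2:ℝ)
    with hfdef
  set x₀ : (Fin k ⊕ Fin m) → ℤ := fun _ => 0 with hx0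
  set N : Fin k → ℝ≥0∞ := fun i =>
    ∑' z' : ({j : Fin k // j ≠ i} → ℤ) × ({j : Fin m // j ∉ T i} → ℤ),
      (⨆ z'' : {j : Fin m // j ∈ T i} → ℤ, ((g i (z', z'') : ℝ≥0) : ℝ≥0∞)) ^ (2:ℝ)
    with hNdef
  -- dependence of f i on coordinates in Daux T i
  have hdep : ∀ i (x y : (Fin k ⊕ Fin m) → ℤ),
      (∀ j ∈ Daux T i, x j = y j) → f i x = f i y := by
    intro i x y h
    have hpair : ((fun j : {j : Fin k // j ≠ i} => x (Sum.inl j.1)),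
        (fun j : {j : Fin m // j ∉ T i} => x (Sum.inr j.1)))
        = ((fun j : {j : Fin k // j ≠ i} => y (Sum.inl j.1)),
        (fun j : {j : Fin m // j ∉ T i} => y (Sum.inr j.1))) := by
      refine Prod.ext ?_ ?_ <;> funext j
      · exact h _ (mem_Daux_inl.mpr j.2)
      · exact h _ (mem_Daux_inr.mpr j.2)
    simp only [hfdef]
    rw [hpair]
  -- the weight condition
  have hw : ∀ j : Fin k ⊕ Fin m,
      (1:ℝ) ≤ ∑ _i ∈ Finset.univ.filter (fun i => j ∈ Daux T i), θ := by
    intro j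
    have hcard : k - 1 ≤ (Finset.univ.filter (fun i => j ∈ Daux T i)).card := by
      rcases j with a | b
      · have hset : Finset.univ.filter (fun i => Sum.inl a ∈ Daux T i)
            = Finset.univ.erase a := by
          rw [← Finset.filter_ne]
          exact Finset.filter_congr fun i _ => by rw [mem_Daux_inl]
        rw [hset, Finset.card_erase_of_mem (Finset.mem_univ a), Finset.card_univ,
          Fintype.card_fin]
      · have hset : Finset.univ.filter (fun i => Sum.inr b ∈ Daux T i)
            = Finset.univ.filter (fun i => ¬ b ∈ T i) := by
          exact Finset.filter_congr fun i _ => by rw [mem_Daux_inr]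
        have hsplit := Finset.card_filter_add_card_filter_not
          (s := (Finset.univ : Finset (Fin k))) (p := fun i => b ∈ T i)
        have hone : (Finset.univ.filter (fun i => b ∈ T i)).card ≤ 1 := by
          refine Finset.card_le_one.mpr fun i hi i' hi' => ?_
          by_contra hne
          have hdisj := hT i i' hne
          have hb1 : b ∈ T i := (Finset.mem_filter.mp hi).2
          have hb2 : b ∈ T i' := (Finset.mem_filter.mp hi').2
          exact (Finset.disjoint_left.mp hdisj hb1) hb2
        rw [hset]
        have hku : (Finset.univ : Finset (Fin k)).card = k := by
          rw [Finset.card_univ, Fintype.card_fin]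
        omega
    rw [Finset.sum_const, nsmul_eq_mul, hθdef, mul_one_div, le_div_iff₀ hk1, one_mul]
    have hcast : ((k:ℝ) - 1) = ((k - 1 : ℕ) : ℝ) := by
      rw [Nat.cast_sub (by omega : 1 ≤ k)]; norm_num
    rw [hcast]
    exact_mod_cast hcard
  -- apply the discrete Finner inequality
  have main := finner_discrete (ι := Fin k) Finset.univ (fun _ => θ) (fun _ => hθ0)
    (Daux T) f hdep (fun i => Finset.subset_univ _) (fun j _ => hw j) x₀
  -- identify the marginals with the right-hand side sums
  have h3 : ∀ i, (∫⋯∫⁻_(Daux T i), f i ∂(fun _ => (Measure.count : Measure ℤ))) x₀ = N i := by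
    intro i
    rw [lmarginal_count_tsum, hNdef,
      ← Equiv.tsum_eq (Eaux T i) (fun y => f i (Function.updateFinset x₀ (Daux T i) y))]
    refine tsum_congr fun z' => ?_
    have hpair : ((fun j : {j : Fin k // j ≠ i} =>
          Function.updateFinset x₀ (Daux T i) (Eaux T i z') (Sum.inl j.1)),
        (fun j : {j : Fin m // j ∉ T i} =>
          Function.updateFinset x₀ (Daux T i) (Eaux T i z') (Sum.inr j.1))) = z' := by
      refine Prod.ext ?_ ?_ <;> funext j
      · have hmem : Sum.inl j.1 ∈ Daux T i := mem_Daux_inl.mpr j.2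
        simp only [Function.updateFinset, dif_pos hmem]
        simp [Eaux, j.2]
      · have hmem : Sum.inr j.1 ∈ Daux T i := mem_Daux_inr.mpr j.2
        simp only [Function.updateFinset, dif_pos hmem]
        simp [Eaux, j.2]
    simp only [hfdef]
    rw [hpair]
  -- the pointwise comparison of the integrands
  let e := Equiv.sumArrowEquivProdArrow (Fin k) (Fin m) ℤ
  have h1 : ∀ x : (Fin k ⊕ Fin m) → ℤ,
      (∏ i, ((g i ⟨⟨fun j => (e x).1 j.1, fun j => (e x).2 j.1⟩,
        fun j => (e x).2 j.1⟩ : ℝ≥0) : ℝ≥0∞)) ^ q ≤ ∏ i, f i x ^ θ := by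
    intro x
    rw [← ENNReal.prod_rpow_of_nonneg hq0]
    refine Finset.prod_le_prod' fun i _ => ?_
    have hle : ((g i ⟨⟨fun j => (e x).1 j.1, fun j => (e x).2 j.1⟩,
        fun j => (e x).2 j.1⟩ : ℝ≥0) : ℝ≥0∞)
        ≤ ⨆ z'' : {j : Fin m // j ∈ T i} → ℤ,
          ((g i (((fun j : {j : Fin k // j ≠ i} => x (Sum.inl j.1)),
            (fun j : {j : Fin m // j ∉ T i} => x (Sum.inr j.1))), z'') : ℝ≥0) : ℝ≥0∞) :=
      le_iSup (fun z'' : {j : Fin m // j ∈ T i} → ℤ =>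
        ((g i (((fun j : {j : Fin k // j ≠ i} => x (Sum.inl j.1)),
          (fun j : {j : Fin m // j ∉ T i} => x (Sum.inr j.1))), z'') : ℝ≥0) : ℝ≥0∞))
        (fun j => x (Sum.inr j.1))
    calc ((g i ⟨⟨fun j => (e x).1 j.1, fun j => (e x).2 j.1⟩,
          fun j => (e x).2 j.1⟩ : ℝ≥0) : ℝ≥0∞) ^ q
        ≤ (⨆ z'' : {j : Fin m // j ∈ T i} → ℤ,
          ((g i (((fun j : {j : Fin k // j ≠ i} => x (Sum.inl j.1)),
            (fun j : {j : Fin m // j ∉ T i} => x (Sum.inr j.1))), z'') : ℝ≥0) : ℝ≥0∞)) ^ q :=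
          ENNReal.rpow_le_rpow hle hq0
      _ = f i x ^ θ := by
          simp only [hfdef]
          rw [← ENNReal.rpow_mul]
          congr 1
          rw [hq, hθdef]
          field_simp
  -- chain of inequalities
  have hchain : (∑' z : (Fin k → ℤ) × (Fin m → ℤ),
      (∏ i, ((g i ⟨⟨fun j => z.1 j.1, fun j => z.2 j.1⟩, fun j => z.2 j.1⟩ : ℝ≥0) :
        ℝ≥0∞)) ^ q) ≤ ∏ i, N i ^ θ := by
    calc ∑' z : (Fin k → ℤ) × (Fin m → ℤ),
        (∏ i, ((g i ⟨⟨fun j => z.1 j.1, fun j => z.2 j.1⟩, fun j => z.2 j.1⟩ : ℝ≥0) :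
          ℝ≥0∞)) ^ q
        = ∑' x : (Fin k ⊕ Fin m) → ℤ,
          (∏ i, ((g i ⟨⟨fun j => (e x).1 j.1, fun j => (e x).2 j.1⟩,
            fun j => (e x).2 j.1⟩ : ℝ≥0) : ℝ≥0∞)) ^ q :=
          (Equiv.tsum_eq e (fun z => (∏ i, ((g i ⟨⟨fun j => z.1 j.1, fun j => z.2 j.1⟩,
            fun j => z.2 j.1⟩ : ℝ≥0) : ℝ≥0∞)) ^ q)).symm
      _ ≤ ∑' x : (Fin k ⊕ Fin m) → ℤ, ∏ i, f i x ^ θ := ENNReal.tsum_le_tsum h1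
      _ = (∫⋯∫⁻_Finset.univ, (fun x => ∏ i, f i x ^ θ)
          ∂(fun _ => (Measure.count : Measure ℤ))) x₀ := by
          rw [lmarginal_univ, pi_count_eq, lintegral_count]
      _ ≤ ∏ i, ((∫⋯∫⁻_(Daux T i), f i ∂(fun _ => (Measure.count : Measure ℤ))) x₀) ^ θ := main
      _ = ∏ i, N i ^ θ := by
          exact Finset.prod_congr rfl fun i _ => by rw [h3 i]
  -- conclude
  calc (∑' z : (Fin k → ℤ) × (Fin m → ℤ),
      (∏ i, ((g i ⟨⟨fun j => z.1 j.1, fun j => z.2 j.1⟩, fun j => z.2 j.1⟩ : ℝ≥0) :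
        ℝ≥0∞)) ^ q) ^ (((k : ℝ) - 1) / 2)
      ≤ (∏ i, N i ^ θ) ^ (((k : ℝ) - 1) / 2) :=
        ENNReal.rpow_le_rpow hchain (by positivity)
    _ = ∏ i, N i ^ ((1:ℝ)/2) := by
        rw [← ENNReal.prod_rpow_of_nonneg (by positivity : (0:ℝ) ≤ ((k:ℝ) - 1) / 2)]
        refine Finset.prod_congr rfl fun i _ => ?_
        rw [← ENNReal.rpow_mul]
        congr 1
        rw [hθdef]
        field_simp
end
end

section
/- Orthogonalizing transversal subspaces: let N₁, …, N_k be subspaces of ℝⁿ with dim N_i = d_i, ∑ d_i ≤ n, and |N₁ ∧ ⋯ ∧ N_k| ≥ ν > 0. Then there exists an invertible linear map A : ℝⁿ → ℝⁿ with ‖A‖ + ‖A^{-1}‖ ≤ C(n) ν^{-1} such that the images (A*)^{-1} N₁, …, (A*)^{-1} N_k are pairwise orthogonal subspaces of ℝⁿ. -/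
/-!
Complete the vectors `v i a` by an orthonormal basis of the orthogonal complement of their span to
a family `u` of `n` unit vectors. Its Gram determinant is that of the `v i a`, so the matrix `M`
with columns `u c` satisfies `ν ≤ |det M|`. Take `A = Mᴴ`: then `(A⁻¹)* = M⁻¹` sends `u c` to the
standard basis vector `e c`, so it maps the `N i` onto spans of disjoint sets of standard basis
vectors. The entries of `M` are bounded by `1` and, by Cramer's rule, those of `M⁻¹` by `n! / ν`,
which bounds both operator norms.
-/

open scoped RealInnerProductSpace Nat
open Matrix

namespace Matrix

variable {m : Type*} [Fintype m] [DecidableEq m]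

theorem abs_det_le_factorial {M : Matrix m m ℝ} (hM : ∀ i j, |M i j| ≤ 1) :
    |M.det| ≤ (Fintype.card m)! := by
  simpa using det_le (abv := AbsoluteValue.abs) hM

theorem abs_inv_apply_le {M : Matrix m m ℝ} (hM : ∀ i j, |M i j| ≤ 1) (i j : m) :
    |M⁻¹ i j| ≤ (Fintype.card m)! / |M.det| := by
  have hadj : |M.adjugate i j| ≤ (Fintype.card m)! := by
    rw [adjugate_apply]
    refine abs_det_le_factorial fun r c => ?_
    rw [updateRow_apply]
    split_ifs
    · rcases eq_or_ne c i with rfl | h <;> simp [*]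
    · exact hM r c
  rw [inv_def, smul_apply, smul_eq_mul, Ring.inverse_eq_inv', abs_mul, abs_inv, inv_mul_eq_div]
  exact div_le_div_of_nonneg_right hadj (abs_nonneg _)

theorem norm_toEuclideanCLM_le (M : Matrix m m ℝ) {c : ℝ} (hc : 0 ≤ c)
    (hM : ∀ i j, |M i j| ≤ c) : ‖toEuclideanCLM (𝕜 := ℝ) M‖ ≤ Fintype.card m * c := by
  refine ContinuousLinearMap.opNorm_le_bound _ (by positivity) fun x => ?_
  refine (pow_le_pow_iff_left₀ (norm_nonneg _) (by positivity) two_ne_zero).mp ?_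
  calc ‖toEuclideanCLM (𝕜 := ℝ) M x‖ ^ 2 = ∑ r, (∑ j, M r j * x j) ^ 2 := by
        simp [EuclideanSpace.real_norm_sq_eq, mulVec, dotProduct]
    _ ≤ ∑ r, (∑ j, M r j ^ 2) * ∑ j, x j ^ 2 :=
        Finset.sum_le_sum fun r _ => Finset.sum_mul_sq_le_sq_mul_sq _ _ _
    _ ≤ ∑ _r : m, (∑ _j : m, c ^ 2) * ‖x‖ ^ 2 := by
        rw [EuclideanSpace.real_norm_sq_eq]
        refine Finset.sum_le_sum fun r _ => mul_le_mul_of_nonneg_right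
          (Finset.sum_le_sum fun j _ => ?_) (by positivity)
        simpa only [sq_abs] using pow_le_pow_left₀ (abs_nonneg _) (hM r j) 2
    _ = (Fintype.card m * c * ‖x‖) ^ 2 := by
        simp only [Finset.sum_const, Finset.card_univ, nsmul_eq_mul]; ring

theorem norm_toEuclideanCLM_add_norm_toEuclideanCLM_inv_le {M : Matrix m m ℝ}
    (hM : ∀ i j, |M i j| ≤ 1) {ν : ℝ} (hν : 0 < ν) (hνM : ν ≤ |M.det|) :
    ‖toEuclideanCLM (𝕜 := ℝ) M‖ + ‖toEuclideanCLM (𝕜 := ℝ) M⁻¹‖ ≤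
      2 * Fintype.card m * (Fintype.card m)! * ν⁻¹ := by
  have hfac : 1 ≤ (Fintype.card m)! * ν⁻¹ := by
    rw [← div_eq_mul_inv, one_le_div hν]
    exact hνM.trans (abs_det_le_factorial hM)
  have hinv : ∀ i j, |M⁻¹ i j| ≤ (Fintype.card m)! * ν⁻¹ := fun i j =>
    (abs_inv_apply_le hM i j).trans <| by
      rw [div_eq_mul_inv]; gcongr
  calc _ ≤ Fintype.card m * 1 + Fintype.card m * ((Fintype.card m)! * ν⁻¹) :=
        add_le_add (norm_toEuclideanCLM_le M zero_le_one hM)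
          (norm_toEuclideanCLM_le _ (by positivity) hinv)
    _ ≤ _ := by nlinarith [(Fintype.card m).cast_nonneg (α := ℝ)]

section RCLike

variable {𝕜 : Type*} [RCLike 𝕜]

theorem toEuclideanCLM_inv_apply_toEuclideanCLM_apply {M : Matrix m m 𝕜}
    (hM : IsUnit M.det) (x : EuclideanSpace 𝕜 m) :
    toEuclideanCLM (𝕜 := 𝕜) M⁻¹ (toEuclideanCLM (𝕜 := 𝕜) M x) = x := by
  rw [← ContinuousLinearMap.comp_apply, ← ContinuousLinearMap.mul_def, ← map_mul,
    nonsing_inv_mul _ hM, map_one, one_apply_eq_self]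

theorem toEuclideanCLM_apply_toEuclideanCLM_inv_apply {M : Matrix m m 𝕜}
    (hM : IsUnit M.det) (x : EuclideanSpace 𝕜 m) :
    toEuclideanCLM (𝕜 := 𝕜) M (toEuclideanCLM (𝕜 := 𝕜) M⁻¹ x) = x := by
  rw [← ContinuousLinearMap.comp_apply, ← ContinuousLinearMap.mul_def, ← map_mul,
    mul_nonsing_inv _ hM, map_one, one_apply_eq_self]

noncomputable def toEuclideanCLE (M : Matrix m m 𝕜) (hM : IsUnit M.det) :
    EuclideanSpace 𝕜 m ≃L[𝕜] EuclideanSpace 𝕜 m :=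
  .equivOfInverse (toEuclideanCLM (𝕜 := 𝕜) M) (toEuclideanCLM (𝕜 := 𝕜) M⁻¹)
    (toEuclideanCLM_inv_apply_toEuclideanCLM_apply hM)
    (toEuclideanCLM_apply_toEuclideanCLM_inv_apply hM)

theorem toEuclideanCLM_of_apply_single (u : m → EuclideanSpace 𝕜 m) (c : m) :
    toEuclideanCLM (𝕜 := 𝕜) (of fun r c => u c r) (EuclideanSpace.single c 1) = u c := by
  ext r
  simp

end RCLike

theorem det_gram_eq_sq_det_of (u : m → EuclideanSpace ℝ m) :
    (gram ℝ u).det = (of fun r c => u c r).det ^ 2 := by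
  rw [gram_eq_conjTranspose_mul (EuclideanSpace.basisFun m ℝ), det_mul, det_conjTranspose]
  simp [sq]

end Matrix

section Completion

variable {E : Type*} [NormedAddCommGroup E] [InnerProductSpace ℝ E]
  {ι : Type*} [Fintype ι]

theorem exists_orthonormal_orthogonal_family [FiniteDimensional ℝ E] (v : ι → E) {k : ℕ}
    (hk : Fintype.card ι + k ≤ Module.finrank ℝ E) :
    ∃ w : Fin k → E, Orthonormal ℝ w ∧ ∀ i l, ⟪v i, w l⟫ = 0 := by
  set S := Submodule.span ℝ (Set.range v)
  have hS : k ≤ Module.finrank ℝ Sᗮ := by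
    have hS' : Module.finrank ℝ S ≤ Fintype.card ι := finrank_range_le_card v
    have := S.finrank_add_finrank_orthogonal
    omega
  let b := stdOrthonormalBasis ℝ Sᗮ
  refine ⟨fun l => b (Fin.castLE hS l), ?_, fun i l => ?_⟩
  · exact (b.orthonormal.comp _ (Fin.castLE_injective hS)).comp_linearIsometry Sᗮ.subtypeₗᵢ
  · exact Submodule.inner_right_of_mem_orthogonal (Submodule.subset_span (Set.mem_range_self i))
      (b _).2

theorem det_gram_sumElim {κ : Type*} [Fintype κ] [DecidableEq ι] [DecidableEq κ] {v : ι → E}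
    {w : κ → E} (hw : Orthonormal ℝ w) (hvw : ∀ i l, ⟪v i, w l⟫ = 0) :
    (gram ℝ (Sum.elim v w)).det = (gram ℝ v).det := by
  have hblocks : gram ℝ (Sum.elim v w) = fromBlocks (gram ℝ v) 0 0 1 := by
    rw [← gram_eq_one_iff_orthonormal.mpr hw]
    ext (i | l) (j | l') <;> simp [gram_apply, hvw, real_inner_comm]
  rw [hblocks, det_fromBlocks_zero₂₁, det_one, mul_one]

theorem exists_unit_family_extending_det_gram_eq [FiniteDimensional ℝ E] [DecidableEq ι]
    (v : ι → E) (hv : ∀ i, ‖v i‖ = 1) {n : ℕ} (hn : Module.finrank ℝ E = n)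
    (hι : Fintype.card ι ≤ n) :
    ∃ (u : Fin n → E) (f : ι ↪ Fin n),
      (∀ c, ‖u c‖ = 1) ∧ (∀ i, u (f i) = v i) ∧ (gram ℝ u).det = (gram ℝ v).det := by
  obtain ⟨w, hw, hvw⟩ := exists_orthonormal_orthogonal_family v (k := n - Fintype.card ι)
    (by omega)
  let σ : ι ⊕ Fin (n - Fintype.card ι) ≃ Fin n :=
    Fintype.equivFinOfCardEq (by rw [Fintype.card_sum, Fintype.card_fin]; omega)
  refine ⟨Sum.elim v w ∘ σ.symm, Function.Embedding.inl.trans σ.toEmbedding, fun c => ?_,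
    fun i => by simp, ?_⟩
  · change ‖Sum.elim v w (σ.symm c)‖ = 1
    rcases σ.symm c with i | l
    exacts [hv i, hw.1 l]
  · rw [show gram ℝ (Sum.elim v w ∘ σ.symm) = (gram ℝ (Sum.elim v w)).submatrix σ.symm σ.symm
      from rfl, det_submatrix_equiv_self, det_gram_sumElim hw hvw]

end Completion

theorem exists_continuousLinearEquiv_adjoint_symm_apply_eq_single {m : Type*} [Fintype m]
    [DecidableEq m] (u : m → EuclideanSpace ℝ m) (hu : ∀ c, ‖u c‖ = 1) {ν : ℝ} (hν : 0 < ν)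
    (hνu : ν ≤ √(gram ℝ u).det) :
    ∃ A : EuclideanSpace ℝ m ≃L[ℝ] EuclideanSpace ℝ m,
      ‖(A : EuclideanSpace ℝ m →L[ℝ] EuclideanSpace ℝ m)‖ +
          ‖(A.symm : EuclideanSpace ℝ m →L[ℝ] EuclideanSpace ℝ m)‖ ≤
        2 * Fintype.card m * (Fintype.card m)! * ν⁻¹ ∧
      ∀ c, ContinuousLinearMap.adjoint
        (A.symm : EuclideanSpace ℝ m →L[ℝ] EuclideanSpace ℝ m) (u c) = EuclideanSpace.single c 1 := by
  set M : Matrix m m ℝ := of fun r c => u c r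
  have hM : ∀ r c, |Mᴴ r c| ≤ 1 := fun r c => by
    simpa [M, hu] using PiLp.norm_apply_le (u r) c
  have hνM : ν ≤ |Mᴴ.det| := by
    rwa [det_gram_eq_sq_det_of, Real.sqrt_sq_eq_abs, ← star_trivial M.det, ← det_conjTranspose]
      at hνu
  have hunit : IsUnit Mᴴ.det := isUnit_iff_ne_zero.mpr (abs_pos.mp (hν.trans_le hνM))
  refine ⟨toEuclideanCLE Mᴴ hunit,
    norm_toEuclideanCLM_add_norm_toEuclideanCLM_inv_le hM hν hνM, fun c => ?_⟩
  have hMunit : IsUnit M.det := by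
    rwa [det_conjTranspose, star_trivial] at hunit
  change ContinuousLinearMap.adjoint (toEuclideanCLM (𝕜 := ℝ) Mᴴ⁻¹) (u c) = _
  rw [← ContinuousLinearMap.star_eq_adjoint, ← map_star, star_eq_conjTranspose,
    conjTranspose_nonsing_inv, conjTranspose_conjTranspose, ← toEuclideanCLM_of_apply_single u c,
    toEuclideanCLM_inv_apply_toEuclideanCLM_apply hMunit]

/-- Orthogonalizing transversal subspaces: if `dim N_i = d_i`, `∑ d_i ≤ n` and the wedge of
orthonormal bases of the `N_i` (square root of the Gram determinant) is `≥ ν > 0`, then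
there is an invertible `A : ℝⁿ → ℝⁿ` with `‖A‖ + ‖A⁻¹‖ ≤ C(n) ν⁻¹` such that the images
`(A*)⁻¹ N_i` are pairwise orthogonal. -/
theorem stmt17 (n : ℕ) :
    ∃ C : ℝ, 0 < C ∧
      ∀ (k : ℕ) (d : Fin k → ℕ)
        (N : Fin k → Submodule ℝ (EuclideanSpace ℝ (Fin n)))
        (v : (i : Fin k) → Fin (d i) → EuclideanSpace ℝ (Fin n)),
        (∀ i, Orthonormal ℝ (v i)) →
        (∀ i, Submodule.span ℝ (Set.range (v i)) = N i) →
        (∑ i, d i) ≤ n →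
        ∀ ν : ℝ, 0 < ν →
          ν ≤ Real.sqrt (Matrix.det
            (Matrix.of fun p q : (i : Fin k) × Fin (d i) =>
              ⟪v p.1 p.2, v q.1 q.2⟫)) →
          ∃ A : EuclideanSpace ℝ (Fin n) ≃L[ℝ] EuclideanSpace ℝ (Fin n),
            ‖(A : EuclideanSpace ℝ (Fin n) →L[ℝ] EuclideanSpace ℝ (Fin n))‖ +
                ‖(A.symm : EuclideanSpace ℝ (Fin n) →L[ℝ] EuclideanSpace ℝ (Fin n))‖ ≤
              C * ν⁻¹ ∧
            ∀ i j, i ≠ j →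
              ∀ x ∈ Submodule.map (ContinuousLinearMap.adjoint
                  (A.symm : EuclideanSpace ℝ (Fin n) →L[ℝ] EuclideanSpace ℝ (Fin n)) :
                    EuclideanSpace ℝ (Fin n) →ₗ[ℝ] EuclideanSpace ℝ (Fin n)) (N i),
              ∀ y ∈ Submodule.map (ContinuousLinearMap.adjoint
                  (A.symm : EuclideanSpace ℝ (Fin n) →L[ℝ] EuclideanSpace ℝ (Fin n)) :
                    EuclideanSpace ℝ (Fin n) →ₗ[ℝ] EuclideanSpace ℝ (Fin n)) (N j),
                ⟪x, y⟫ = 0 := by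
  refine ⟨2 * n * n ! + 1, by positivity, fun k d N v hv hN hsum ν hν hνv => ?_⟩
  obtain ⟨u, f, hu, huv, hgram⟩ := exists_unit_family_extending_det_gram_eq
    (fun p : (i : Fin k) × Fin (d i) => v p.1 p.2) (fun p => (hv p.1).1 p.2)
    finrank_euclideanSpace_fin (by simpa using hsum)
  obtain ⟨A, hA, hAu⟩ :=
    exists_continuousLinearEquiv_adjoint_symm_apply_eq_single u hu hν (hgram ▸ hνv)
  refine ⟨A, hA.trans ?_, fun i j hij => ?_⟩
  · rw [Fintype.card_fin]
    gcongr
    linarith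
  rw [← Submodule.isOrtho_iff_inner_eq, ← hN i, ← hN j, Submodule.map_span, Submodule.map_span,
    Submodule.isOrtho_span]
  rintro _ ⟨_, ⟨a, rfl⟩, rfl⟩ _ ⟨_, ⟨b, rfl⟩, rfl⟩
  have hAv : ∀ p, ContinuousLinearMap.adjoint
      (A.symm : EuclideanSpace ℝ (Fin n) →L[ℝ] EuclideanSpace ℝ (Fin n)) (v p.1 p.2) =
        EuclideanSpace.single (f p) 1 := fun p => huv p ▸ hAu (f p)
  simp [hAv ⟨i, a⟩, hAv ⟨j, b⟩, EuclideanSpace.inner_single_left, hij.symm]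
end
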